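/- Energy-increment/uniformization: For every δ ∈ (0,1] and every f : ℤ/pℤ → ℂ with ‖f‖_∞ ≤ 1, there exist a set Γ of pre-characters with |Γ| ≤ 4/δ² and a positive integer n ≤ 16/δ such that, setting ℬ = ℬ(Γ,n), for every character χ of ℤ/pℤ one has |⟨f − 𝔼(f|ℬ), χ⟩| ≤ δ. -/

import Mathlib

/-!
Averaging over the cells of `ℬ(Γ,n)` is the orthogonal projection of `ℓ²(ℤ/pℤ)` onto the functions
constant on cells, so the energy `‖𝔼(f|ℬ(Γ,n))‖²` is at most `p` and only grows as `Γ` grows.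
With `n = ⌊16/δ⌋` we have `2π/n ≤ δ/2`; once the pre-character `x ↦ rx/p` lies in `Γ`, the
character `χ_r` varies by at most `2π/n` on each cell, so it lies within `√p δ/2` of its projection.
Hence if `χ_r` correlates with `f - 𝔼(f|ℬ(Γ,n))` beyond `δ`, adding that pre-character to `Γ`
raises the energy by at least `p δ²/4`, which can happen at most `4/δ²` times.
-/

open Finset Complex

noncomputable section
open scoped Classical

/-- The representative of a point of `𝕋 = ℝ/ℤ` lying in `[0,1)`. -/
def torusRep (t : AddCircle (1 : ℝ)) : ℝ :=
  haveI : Fact ((0 : ℝ) < 1) := ⟨one_pos⟩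
  ((AddCircle.equivIco 1 0) t : ℝ)

/-- Same cell of the cube partition `ℬ(Γ,n)`. -/
def sameCell (p : ℕ) (Γ : Finset (ZMod p →+ AddCircle (1 : ℝ))) (n : ℕ)
    (x y : ZMod p) : Prop :=
  ∀ φ ∈ Γ, ⌊(n : ℝ) * torusRep (φ x)⌋ = ⌊(n : ℝ) * torusRep (φ y)⌋

/-- Conditional expectation of `f` with respect to `ℬ(Γ,n)`. -/
def condExp (p : ℕ) [NeZero p] (Γ : Finset (ZMod p →+ AddCircle (1 : ℝ))) (n : ℕ)
    (f : ZMod p → ℂ) (x : ZMod p) : ℂ :=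
  (∑ y ∈ Finset.univ.filter (sameCell p Γ n x), f y) /
    ((Finset.univ.filter (sameCell p Γ n x)).card : ℂ)

/-- The character `χ_r(x) = e^{2πirx/p}`. -/
def chi (p : ℕ) [NeZero p] (r x : ZMod p) : ℂ :=
  Complex.exp (2 * Real.pi * Complex.I * (r.val : ℂ) * (x.val : ℂ) / p)


open scoped InnerProductSpace Real

section ClassAverage

variable {α 𝕜 : Type*} [RCLike 𝕜] {R : α → α → Prop}

variable (𝕜) in
def classConstant (R : α → α → Prop) :
    Submodule 𝕜 (EuclideanSpace 𝕜 α) where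
  carrier := {u | ∀ x y, R x y → u x = u y}
  add_mem' hu hv x y h := by simp [hu x y h, hv x y h]
  zero_mem' _ _ _ := rfl
  smul_mem' c u hu x y h := by simp [hu x y h]

lemma classConstant_mono {R' : α → α → Prop} (h : ∀ x y, R' x y → R x y) :
    classConstant 𝕜 R ≤ classConstant 𝕜 R' :=
  fun _ hu x y hxy => hu x y (h x y hxy)

variable [Fintype α]

def classAverage (R : α → α → Prop) (f : α → 𝕜) (x : α) : 𝕜 :=
  (∑ y ∈ univ.filter (R x), f y) / #(univ.filter (R x))

lemma filter_rel_eq_of_rel (hR : Equivalence R) {x y : α} (h : R x y) :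
    univ.filter (R x) = univ.filter (R y) := by
  ext z
  simp only [mem_filter, mem_univ, true_and]
  exact ⟨hR.trans (hR.symm h), hR.trans h⟩

lemma classAverage_eq_of_rel (hR : Equivalence R) (f : α → 𝕜) {x y : α} (h : R x y) :
    classAverage R f x = classAverage R f y := by
  rw [classAverage, classAverage, filter_rel_eq_of_rel hR h]

lemma card_filter_rel_pos (hR : Equivalence R) (x : α) : 0 < #(univ.filter (R x)) :=
  card_pos.mpr ⟨x, mem_filter.mpr ⟨mem_univ x, hR.refl x⟩⟩

lemma sum_classAverage_mul (hR : Equivalence R) {u : α → 𝕜} (hu : ∀ x y, R x y → u x = u y)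
    (f : α → 𝕜) : ∑ x, classAverage R f x * u x = ∑ x, f x * u x := by
  have hterm : ∀ x, classAverage R f x * u x =
      ∑ y ∈ univ.filter (R x), f y * u y / #(univ.filter (R y)) := by
    intro x
    rw [classAverage, div_mul_eq_mul_div, sum_mul, sum_div]
    refine sum_congr rfl fun y hy => ?_
    have hxy : R x y := (mem_filter.mp hy).2
    rw [hu x y hxy, filter_rel_eq_of_rel hR hxy]
  calc ∑ x, classAverage R f x * u x
      = ∑ x, ∑ y ∈ univ.filter (R x), f y * u y / #(univ.filter (R y)) :=
        sum_congr rfl fun x _ => hterm x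
    _ = ∑ y, ∑ x ∈ univ.filter (R y), f y * u y / #(univ.filter (R y)) :=
        sum_comm' fun x y => by simpa using ⟨hR.symm, hR.symm⟩
    _ = ∑ y, f y * u y := sum_congr rfl fun y _ => by
        have : (#(univ.filter (R y)) : 𝕜) ≠ 0 := by simp [(card_filter_rel_pos hR y).ne']
        rw [sum_const, nsmul_eq_mul]
        field_simp

theorem starProjection_classConstant (hR : Equivalence R) (f : α → 𝕜) :
    (classConstant 𝕜 R).starProjection (WithLp.toLp 2 f) = WithLp.toLp 2 (classAverage R f) := by
  refine Submodule.eq_starProjection_of_mem_of_inner_eq_zero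
    (fun x y h => classAverage_eq_of_rel hR f h) fun w hw => ?_
  have hw' : ∀ x y, R x y → (starRingEnd 𝕜) (w x) = (starRingEnd 𝕜) (w y) :=
    fun x y h => by rw [hw x y h]
  rw [inner_eq_zero_symm]
  simp only [PiLp.inner_apply, RCLike.inner_apply, PiLp.sub_apply, sub_mul, sum_sub_distrib,
    sum_classAverage_mul hR hw', sub_self]

lemma norm_sub_classAverage_le (hR : Equivalence R) {f : α → 𝕜} {x : α} {ε : ℝ}
    (hf : ∀ y, R x y → ‖f x - f y‖ ≤ ε) : ‖f x - classAverage R f x‖ ≤ ε := by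
  have hpos := card_filter_rel_pos hR x
  have hc : (#(univ.filter (R x)) : 𝕜) ≠ 0 := by simp [hpos.ne']
  have : f x - classAverage R f x =
      (∑ y ∈ univ.filter (R x), (f x - f y)) / #(univ.filter (R x)) := by
    rw [classAverage, sum_sub_distrib, sub_div, sum_const, nsmul_eq_mul, mul_div_cancel_left₀ _ hc]
  rw [this, norm_div, RCLike.norm_natCast, div_le_iff₀ (by positivity)]
  calc _ ≤ ∑ y ∈ univ.filter (R x), ‖f x - f y‖ := norm_sum_le _ _
    _ ≤ ∑ y ∈ univ.filter (R x), ε := sum_le_sum fun y hy => hf y (mem_filter.mp hy).2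
    _ = _ := by rw [sum_const, nsmul_eq_mul, mul_comm]

end ClassAverage

section Projection

variable {𝕜 E : Type*} [RCLike 𝕜] [NormedAddCommGroup E] [InnerProductSpace 𝕜 E]
  {K K' : Submodule 𝕜 E} [K.HasOrthogonalProjection] [K'.HasOrthogonalProjection]

lemma starProjection_starProjection_of_le (h : K ≤ K') (v : E) :
    K'.starProjection (K.starProjection v) = K.starProjection v :=
  K'.starProjection_eq_self_iff.mpr (h (K.starProjection_apply_mem v))

lemma norm_sq_starProjection_of_le (h : K ≤ K') (v : E) :
    ‖K'.starProjection v‖ ^ 2 =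
      ‖K.starProjection v‖ ^ 2 + ‖K'.starProjection v - K.starProjection v‖ ^ 2 := by
  have hproj : K.starProjection (K'.starProjection v) = K.starProjection v :=
    congrArg (· v) (Submodule.starProjection_comp_starProjection_of_le h)
  have := K.norm_sq_eq_add_norm_sq_starProjection (K'.starProjection v)
  rwa [Submodule.starProjection_orthogonal_val, hproj] at this

lemma norm_inner_sub_starProjection_le (h : K ≤ K') (u v : E) :
    ‖⟪u, v - K.starProjection v⟫_𝕜‖ ≤
      ‖u - K'.starProjection u‖ * ‖v‖ + ‖u‖ * ‖K'.starProjection v - K.starProjection v‖ := by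
  have hg : ‖v - K.starProjection v‖ ≤ ‖v‖ := by
    rw [← Submodule.starProjection_orthogonal_val]
    exact Kᗮ.norm_starProjection_apply_le v
  have hsplit : ⟪u, v - K.starProjection v⟫_𝕜 =
      ⟪u - K'.starProjection u, v - K.starProjection v⟫_𝕜 +
      ⟪u, K'.starProjection v - K.starProjection v⟫_𝕜 := by
    rw [inner_sub_left, K'.inner_starProjection_left_eq_right, map_sub,
      starProjection_starProjection_of_le h]
    ring
  calc ‖⟪u, v - K.starProjection v⟫_𝕜‖
      ≤ ‖⟪u - K'.starProjection u, v - K.starProjection v⟫_𝕜‖ +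
          ‖⟪u, K'.starProjection v - K.starProjection v⟫_𝕜‖ := by
        rw [hsplit]; exact norm_add_le _ _
    _ ≤ _ := by
        gcongr
        · exact (norm_inner_le_norm _ _).trans (by gcongr)
        · exact norm_inner_le_norm _ _

end Projection

theorem exists_of_energy_increment {ι : Type*} (energy : ι → ℝ) (size : ι → ℕ) (P : ι → Prop)
    {c B : ℝ} (hc : 0 < c) (hB : ∀ i, energy i ≤ B)
    (step : ∀ i, ¬ P i → ∃ j, size j ≤ size i + 1 ∧ energy i + c ≤ energy j)
    {i₀ : ι} (h₀ : size i₀ * c ≤ energy i₀) : ∃ i, P i ∧ size i * c ≤ B := by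
  suffices ∀ k : ℕ, ∀ i, B < energy i + k * c → size i * c ≤ energy i → ∃ i, P i ∧ size i * c ≤ B by
    obtain ⟨k, hk⟩ := exists_nat_gt ((B - energy i₀) / c)
    exact this k i₀ (by rw [div_lt_iff₀ hc] at hk; linarith) h₀
  intro k
  induction k with
  | zero =>
    intro i hi _
    rw [Nat.cast_zero, zero_mul, add_zero] at hi
    linarith [hB i]
  | succ k ih =>
    intro i hi hsize
    by_cases hP : P i
    · exact ⟨i, hP, hsize.trans (hB i)⟩
    obtain ⟨j, hj, hincr⟩ := step i hP
    refine ih j (by push_cast at hi; linarith) ?_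
    calc (size j : ℝ) * c ≤ (size i + 1) * c := by gcongr; exact_mod_cast hj
      _ ≤ energy j := by linarith

lemma EuclideanSpace.norm_le_sqrt_card_mul {𝕜 α : Type*} [RCLike 𝕜] [Fintype α]
    {u : EuclideanSpace 𝕜 α} {ε : ℝ} (hε : 0 ≤ ε) (hu : ∀ i, ‖u i‖ ≤ ε) :
    ‖u‖ ≤ √(Fintype.card α) * ε := by
  rw [EuclideanSpace.norm_eq, ← Real.sqrt_sq hε, ← Real.sqrt_mul (Nat.cast_nonneg _)]
  gcongr
  calc ∑ i, ‖u i‖ ^ 2 ≤ ∑ _i : α, ε ^ 2 := sum_le_sum fun i _ => by gcongr; exact hu i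
    _ = _ := by rw [sum_const, nsmul_eq_mul, card_univ]

lemma AddCircle.toCircle_eq_circleExp_torusRep (t : AddCircle (1 : ℝ)) :
    AddCircle.toCircle t = Circle.exp (2 * π * torusRep t) := by
  have : Fact ((0 : ℝ) < 1) := ⟨one_pos⟩
  conv_lhs => rw [← AddCircle.coe_equivIco (p := (1 : ℝ)) (a := 0) (y := t)]
  rw [AddCircle.toCircle_apply_mk, div_one, torusRep]

lemma norm_circleExp_sub_le (a b : ℝ) : ‖(Circle.exp a : ℂ) - Circle.exp b‖ ≤ |a - b| := by
  have : (Circle.exp a : ℂ) - Circle.exp b = Circle.exp b * (Complex.exp (I * ↑(a - b)) - 1) := by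
    rw [Circle.coe_exp, Circle.coe_exp, mul_sub, mul_one, ← Complex.exp_add]
    push_cast
    ring_nf
  rw [this, norm_mul, Circle.norm_coe, one_mul]
  exact Real.norm_exp_I_mul_ofReal_sub_one_le

def preChar (p : ℕ) [NeZero p] (r : ZMod p) : ZMod p →+ AddCircle (1 : ℝ) :=
  ZMod.toAddCircle.comp (AddMonoidHom.mulLeft r)

section Characters

variable {p : ℕ} [NeZero p]

lemma chi_eq_toCircle_preChar (r x : ZMod p) :
    chi p r x = AddCircle.toCircle (preChar p r x) := by
  have hmul : ((r.val * x.val : ℕ) : ZMod p) = r * x := by simp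
  rw [chi, preChar, AddMonoidHom.comp_apply, AddMonoidHom.coe_mulLeft]
  change _ = (ZMod.toCircle (r * x) : ℂ)
  rw [← hmul, ZMod.toCircle_natCast]
  push_cast
  ring_nf

lemma norm_chi (r x : ZMod p) : ‖chi p r x‖ = 1 := by
  rw [chi_eq_toCircle_preChar, Circle.norm_coe]

lemma norm_chi_sub_chi_le {r x y : ZMod p} {n : ℕ} (hn : 0 < n)
    (h : ⌊(n : ℝ) * torusRep (preChar p r x)⌋ = ⌊(n : ℝ) * torusRep (preChar p r y)⌋) :
    ‖chi p r x - chi p r y‖ ≤ 2 * π / n := by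
  have hn' : (0 : ℝ) < n := Nat.cast_pos.mpr hn
  have hclose := Int.abs_sub_lt_one_of_floor_eq_floor h
  rw [← mul_sub, abs_mul, abs_of_pos hn', ← lt_div_iff₀' hn'] at hclose
  rw [chi_eq_toCircle_preChar, chi_eq_toCircle_preChar, AddCircle.toCircle_eq_circleExp_torusRep,
    AddCircle.toCircle_eq_circleExp_torusRep]
  calc _ ≤ |2 * π * torusRep (preChar p r x) - 2 * π * torusRep (preChar p r y)| :=
        norm_circleExp_sub_le _ _
    _ = 2 * π * |torusRep (preChar p r x) - torusRep (preChar p r y)| := by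
        rw [← mul_sub, abs_mul, abs_of_pos Real.two_pi_pos]
    _ ≤ 2 * π * (1 / n) := by gcongr
    _ = 2 * π / n := by ring

end Characters

lemma sameCell_equivalence (p : ℕ) (Γ : Finset (ZMod p →+ AddCircle (1 : ℝ))) (n : ℕ) :
    Equivalence (sameCell p Γ n) where
  refl _ _ _ := rfl
  symm h φ hφ := (h φ hφ).symm
  trans h h' φ hφ := (h φ hφ).trans (h' φ hφ)

section CubePartition

variable {p : ℕ} [NeZero p] {n : ℕ}

lemma sum_sub_condExp_mul_conj_chi_eq_inner (Γ : Finset (ZMod p →+ AddCircle (1 : ℝ)))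
    (f : ZMod p → ℂ) (r : ZMod p) :
    ∑ x, (f x - condExp p Γ n f x) * (starRingEnd ℂ) (chi p r x) =
      ⟪WithLp.toLp 2 (chi p r), WithLp.toLp 2 f -
        (classConstant ℂ (sameCell p Γ n)).starProjection (WithLp.toLp 2 f)⟫_ℂ := by
  rw [starProjection_classConstant (sameCell_equivalence p Γ n)]
  simp only [PiLp.inner_apply, RCLike.inner_apply, PiLp.sub_apply]
  rfl

lemma norm_toLp_le_sqrt {u : ZMod p → ℂ} (hu : ∀ x, ‖u x‖ ≤ 1) : ‖WithLp.toLp 2 u‖ ≤ √p := by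
  simpa using EuclideanSpace.norm_le_sqrt_card_mul zero_le_one hu

lemma norm_starProjection_toLp_sq_le (K : Submodule ℂ (EuclideanSpace ℂ (ZMod p)))
    [K.HasOrthogonalProjection] {f : ZMod p → ℂ} (hf : ∀ x, ‖f x‖ ≤ 1) :
    ‖K.starProjection (WithLp.toLp 2 f)‖ ^ 2 ≤ p := by
  rw [← Real.sq_sqrt (Nat.cast_nonneg p)]
  gcongr
  exact (K.norm_starProjection_apply_le _).trans (norm_toLp_le_sqrt hf)

lemma energy_increment {δ : ℝ} (hn : 0 < n) (hnδ : 2 * π / n ≤ δ / 2)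
    {f : ZMod p → ℂ} (hf : ∀ x, ‖f x‖ ≤ 1) (Γ : Finset (ZMod p →+ AddCircle (1 : ℝ))) (r : ZMod p)
    (hr : p * δ < ‖⟪WithLp.toLp 2 (chi p r), WithLp.toLp 2 f -
      (classConstant ℂ (sameCell p Γ n)).starProjection (WithLp.toLp 2 f)⟫_ℂ‖) :
    ‖(classConstant ℂ (sameCell p Γ n)).starProjection (WithLp.toLp 2 f)‖ ^ 2 + p * δ ^ 2 / 4 ≤
      ‖(classConstant ℂ (sameCell p (insert (preChar p r) Γ) n)).starProjection
        (WithLp.toLp 2 f)‖ ^ 2 := by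
  set K := classConstant ℂ (sameCell p Γ n)
  set K' := classConstant ℂ (sameCell p (insert (preChar p r) Γ) n)
  have hle : K ≤ K' := classConstant_mono fun x y h φ hφ => h φ (mem_insert_of_mem hφ)
  have happrox : ‖WithLp.toLp 2 (chi p r) - K'.starProjection (WithLp.toLp 2 (chi p r))‖ ≤
      √p * (δ / 2) := by
    have hpt : ∀ x, ‖(chi p r - classAverage (sameCell p (insert (preChar p r) Γ) n) (chi p r)) x‖
        ≤ δ / 2 := fun x => norm_sub_classAverage_le (sameCell_equivalence _ _ _) fun y hxy =>
      (norm_chi_sub_chi_le hn (hxy _ (mem_insert_self _ _))).trans hnδ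
    have := EuclideanSpace.norm_le_sqrt_card_mul
      ((by positivity : 0 ≤ 2 * π / n).trans hnδ) (u := WithLp.toLp 2 _) hpt
    rwa [ZMod.card, WithLp.toLp_sub, ← starProjection_classConstant (sameCell_equivalence _ _ _)]
      at this
  have hsplit := norm_inner_sub_starProjection_le hle (WithLp.toLp 2 (chi p r)) (WithLp.toLp 2 f)
  have hsqrt_mul : √p * √p = p := Real.mul_self_sqrt (Nat.cast_nonneg p)
  have hsqrt : 0 < √p := Real.sqrt_pos.mpr (Nat.cast_pos.mpr (NeZero.pos p))
  have hχ := norm_toLp_le_sqrt (fun x => (norm_chi r x).le)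
  have hf' := norm_toLp_le_sqrt hf
  have hδ : 0 < δ := by linarith [(by positivity : 0 < 2 * π / n)]
  set D := ‖K'.starProjection (WithLp.toLp 2 f) - K.starProjection (WithLp.toLp 2 f)‖
  have hD : √p * (δ / 2) < D := by
    have : √p * (√p * δ) < √p * (√p * (δ / 2) + D) := by
      calc √p * (√p * δ) < _ := by rwa [← mul_assoc, hsqrt_mul]
        _ ≤ √p * (δ / 2) * √p + √p * D := hsplit.trans (by gcongr)
        _ = _ := by ring
    linarith [lt_of_mul_lt_mul_left this hsqrt.le]
  have hD2 : p * δ ^ 2 / 4 ≤ D ^ 2 := by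
    calc p * δ ^ 2 / 4 = (√p * (δ / 2)) ^ 2 := by
          rw [mul_pow, Real.sq_sqrt (Nat.cast_nonneg p)]; ring
      _ ≤ D ^ 2 := by gcongr
  rw [norm_sq_starProjection_of_le hle]
  linarith

end CubePartition

lemma floor_sixteen_div_pos_and_two_pi_div_le {δ : ℝ} (hδ0 : 0 < δ) (hδ1 : δ ≤ 1) :
    0 < ⌊16 / δ⌋₊ ∧ 2 * π / ⌊16 / δ⌋₊ ≤ δ / 2 := by
  have hpos : 0 < ⌊16 / δ⌋₊ := Nat.floor_pos.mpr (by rw [le_div_iff₀ hδ0]; linarith)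
  refine ⟨hpos, ?_⟩
  have hfloor : 16 / δ - 1 < ⌊16 / δ⌋₊ := Nat.sub_one_lt_floor _
  have hδfloor : δ * (16 / δ - 1) = 16 - δ := by field_simp
  rw [div_le_div_iff₀ (by exact_mod_cast hpos) two_pos]
  nlinarith [Real.pi_lt_d2]

theorem uniformization (p : ℕ) (hp : p.Prime) (δ : ℝ) (hδ0 : 0 < δ) (hδ1 : δ ≤ 1)
    (f : ZMod p → ℂ) (hf : ∀ x, ‖f x‖ ≤ 1) :
    haveI : NeZero p := ⟨hp.ne_zero⟩
    ∃ (Γ : Finset (ZMod p →+ AddCircle (1 : ℝ))) (n : ℕ), 0 < n ∧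
      (Γ.card : ℝ) ≤ 4 / δ ^ 2 ∧ (n : ℝ) ≤ 16 / δ ∧
      ∀ r : ZMod p,
        ‖(1 / p : ℂ) * ∑ x : ZMod p,
            (f x - condExp p Γ n f x) * (starRingEnd ℂ) (chi p r x)‖ ≤ δ := by
  have : NeZero p := ⟨hp.ne_zero⟩
  have hp0 : (0 : ℝ) < p := by exact_mod_cast hp.pos
  obtain ⟨hn, hnδ⟩ := floor_sixteen_div_pos_and_two_pi_div_le hδ0 hδ1
  set n := ⌊16 / δ⌋₊
  set P := fun Γ : Finset (ZMod p →+ AddCircle (1 : ℝ)) =>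
    (classConstant ℂ (sameCell p Γ n)).starProjection (WithLp.toLp 2 f)
  obtain ⟨Γ, hgood, hcard⟩ := exists_of_energy_increment (fun Γ => ‖P Γ‖ ^ 2) Finset.card
    (fun Γ => ∀ r, ‖⟪WithLp.toLp 2 (chi p r), WithLp.toLp 2 f - P Γ⟫_ℂ‖ ≤ p * δ)
    (c := p * δ ^ 2 / 4) (B := p) (by positivity)
    (fun Γ => norm_starProjection_toLp_sq_le _ hf)
    (fun Γ hbad => by
      obtain ⟨r, hr⟩ := not_forall.mp hbad
      exact ⟨insert (preChar p r) Γ, card_insert_le _ _,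
        energy_increment hn hnδ hf Γ r (not_le.mp hr)⟩)
    (i₀ := ∅) (by simp)
  refine ⟨Γ, n, hn, ?_, Nat.floor_le (by positivity), fun r => ?_⟩
  · rw [le_div_iff₀ (by positivity)]
    nlinarith
  · rw [sum_sub_condExp_mul_conj_chi_eq_inner, norm_mul, norm_div, norm_one, Complex.norm_natCast,
      one_div_mul_eq_div, div_le_iff₀ hp0, mul_comm]
    exact hgood r
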